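/- For n > 2m, where m = |B| is the number of leaves of a fixed binary tree B, the number of plane binary trees with n leaves for which one of the two root branches is isomorphic to B equals 2·(2^{m−1}/|A(B)|)·C_{n−m}, where C_k = (1/k)binom(2k−2, k−1) is the Catalan number. Consequently, the proportion of plane binary trees with n leaves having a root branch isomorphic to B converges to 2^{−m}/|A(B)| as n → ∞. -/

import Mathlib

open scoped Classical

inductive PTree : Type
  | leaf : PTree
  | node : PTree → PTree → PTree
deriving DecidableEq

namespace PTree

def size : PTree → ℕ
  | leaf => 1
  | node l r => size l + size r

def cherries : PTree → ℕ
  | leaf => 0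
  | node leaf leaf => 1
  | node l r => cherries l + cherries r

def height : PTree → ℕ
  | leaf => 0
  | node l r => max (height l) (height r) + 1

def encode : PTree → ℕ
  | leaf => 0
  | node l r => Nat.pair (encode l) (encode r) + 1

def normalize : PTree → PTree
  | leaf => leaf
  | node l r =>
      let l' := normalize l
      let r' := normalize r
      if encode l' ≤ encode r' then node l' r' else node r' l'

def isoFuns : PTree → PTree → List (ℕ → ℕ)
  | leaf, leaf => [fun i => i]
  | node l r, node l' r' =>
      ((isoFuns l l').flatMap fun g => (isoFuns r r').map fun h =>
        fun i => if i < l.size then g i else h (i - l.size) + l'.size)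
      ++
      ((isoFuns l r').flatMap fun g => (isoFuns r l').map fun h =>
        fun i => if i < l.size then g i + l'.size else h (i - l.size))
  | _, _ => []

def planeTrees : ℕ → Finset PTree
  | 0 => ∅
  | 1 => {leaf}
  | n + 2 =>
      (Finset.range (n + 1)).attach.biUnion fun k =>
        ((planeTrees (k.1 + 1)) ×ˢ (planeTrees (n + 1 - k.1))).image
          fun p => node p.1 p.2
  termination_by n => n
  decreasing_by
  · have := Finset.mem_range.mp k.2; omega
  · omega

def binTrees (n : ℕ) : Finset PTree := (planeTrees n).image normalize

/-- Triples (T, v, S): left plane tree, right plane tree, and a matching `v`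
(a permutation of `0, …, n-1`, encoded as the list of its values) matching
leaf `i` of `T` with leaf `v i` of `S`. -/
def Triples (n : ℕ) : Finset (PTree × PTree × List ℕ) :=
  (planeTrees n) ×ˢ ((planeTrees n) ×ˢ (List.range n).permutations.toFinset)

/-- Two triples represent the same tanglegram iff there are isomorphisms of the left
trees and of the right trees compatible with the matchings. -/
def equivTriple (n : ℕ) (t t' : PTree × PTree × List ℕ) : Bool :=
  (isoFuns t.1 t'.1).any fun φ => (isoFuns t.2.1 t'.2.1).any fun ψ =>
    (List.range n).all fun i => t'.2.2.getD (φ i) 0 == ψ (t.2.2.getD i 0)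

/-- The tanglegrams of size `n`: equivalence classes of triples. -/
def tangleClasses (n : ℕ) : Finset (Finset (PTree × PTree × List ℕ)) :=
  (Triples n).image fun t => (Triples n).filter (fun t' => equivTriple n t t' = true)

/-- The number of tanglegrams of size `n`. -/
def numTanglegrams (n : ℕ) : ℕ := (tangleClasses n).card

/-- The probability that a uniformly random tanglegram of size `n` satisfies the
(isomorphism-invariant) property `P` of triples. -/
noncomputable def tangleProb (n : ℕ) (P : PTree × PTree × List ℕ → Prop) : ℝ :=
  ((tangleClasses n).filter fun c => ∃ t ∈ c, P t).card / numTanglegrams n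

/-- The expectation of the statistic `f` of a uniformly random tanglegram of size `n`. -/
noncomputable def tangleExp (n : ℕ) (f : PTree × PTree × List ℕ → ℕ) : ℝ :=
  ∑' k : ℕ, (k : ℝ) * tangleProb n (fun t => f t = k)

end PTree

namespace PTree

/-- The distribution on pairs of binary trees (canonical representatives) induced by
the two halves of a uniformly random tanglegram of size `n`:
probability that the pair of isomorphism classes of the two trees lies in `S`. -/
noncomputable def nuT (n : ℕ) (S : Finset (PTree × PTree)) : ℝ :=
  tangleProb n fun t => (normalize t.1, normalize t.2.1) ∈ S

/-- The distribution on pairs of binary trees induced by two independent uniformly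
random plane binary trees with `n` leaves. -/
noncomputable def nuP (n : ℕ) (S : Finset (PTree × PTree)) : ℝ :=
  (((planeTrees n) ×ˢ (planeTrees n)).filter
      fun p => (normalize p.1, normalize p.2) ∈ S).card / ((planeTrees n).card ^ 2 : ℝ)

/-- The total variation distance between `nuT` and `nuP`. -/
noncomputable def tvDist (n : ℕ) : ℝ :=
  ((binTrees n ×ˢ binTrees n).powerset).sup' (Finset.powerset_nonempty _)
    fun S => |nuT n S - nuP n S|

/-- The number of occurrences of (trees isomorphic to) `B` as a fringe subtree of `T`. -/
def occ (B : PTree) : PTree → ℕ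
  | leaf => if normalize leaf = normalize B then 1 else 0
  | node l r => (if normalize (node l r) = normalize B then 1 else 0) + occ B l + occ B r

/-- The number of generators of the automorphism group of `T`: the number of internal
vertices whose two branches are isomorphic. -/
def gens : PTree → ℕ
  | leaf => 0
  | node l r => (if normalize l = normalize r then 1 else 0) + gens l + gens r

/-- `T` has a root branch isomorphic to `B`. -/
def hasBranch (B : PTree) : PTree → Prop
  | leaf => False
  | node l r => normalize l = normalize B ∨ normalize r = normalize B

/-- The cherries of a plane binary tree whose leaves are numbered from `k` on
(left to right), as pairs of leaf positions. -/
def cherryList : PTree → ℕ → List (ℕ × ℕ)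
  | leaf, _ => []
  | node leaf leaf, k => [(k, k + 1)]
  | node l r, k => cherryList l k ++ cherryList r (k + l.size)

/-- The number of matched cherries: cherries of `T` whose two leaves are matched by `L`
to the two leaves of a cherry of `S`. -/
def matchedCherries (T S : PTree) (L : List ℕ) : ℕ :=
  (cherryList T 0).countP fun p =>
    (cherryList S 0).any fun q =>
      (L.getD p.1 0 == q.1 && L.getD p.2 0 == q.2) ||
      (L.getD p.1 0 == q.2 && L.getD p.2 0 == q.1)

/-- The number of automorphisms of the tanglegram represented by the triple `(T, L, S)`:
pairs of automorphisms of the two trees compatible with the matching `L`. -/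
def tangleAutCount (T S : PTree) (L : List ℕ) : ℕ :=
  ((isoFuns T T).map fun a =>
    (isoFuns S S).countP fun b =>
      (List.range T.size).all fun i => L.getD (a i) 0 == b (L.getD i 0)).sum

/-- The number of automorphisms of `T` whose cycle type is `μ(s) = 2^s 1^(n-2s)`,
i.e. involutions of the leaves moving exactly `2 s` leaves. -/
def autMuCount (T : PTree) (s : ℕ) : ℕ :=
  (isoFuns T T).countP fun f =>
    ((List.range T.size).all fun i => f (f i) == i) &&
    ((List.range T.size).countP fun i => !(f i == i)) == 2 * s

end PTree


/-! A plane tree with a root branch isomorphic to `B` is `node L R` with `L ≅ B` or `R ≅ B`.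
When `n > 2|B|` the two cases are exclusive and the other branch is an arbitrary plane tree
with `n - |B|` leaves, so the count is `2 · #[B] · C_(n-|B|)`, where the class `[B]` has
`2^(|B|-1)/|A(B)|` elements. The limit follows from `C_k / C_(k+1) → 1/4`. -/

open Finset Filter Topology

namespace PTree

lemma size_pos (T : PTree) : 0 < T.size := by
  induction T with
  | leaf => exact Nat.one_pos
  | node l r ihl _ => exact Nat.add_pos_left ihl _

lemma mem_planeTrees {n : ℕ} {T : PTree} : T ∈ planeTrees n ↔ T.size = n := by
  constructor
  · induction n using Nat.strong_induction_on generalizing T with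
    | _ n ih =>
      match n with
      | 0 => simp [planeTrees]
      | 1 => simp +contextual [planeTrees, size]
      | n + 2 =>
        rw [planeTrees]
        simp only [mem_biUnion, mem_attach, mem_image, mem_product, true_and, Subtype.exists,
          mem_range, exists_prop]
        rintro ⟨k, hk, ⟨l, r⟩, ⟨hl, hr⟩, rfl⟩
        rw [size, ih _ (by omega) hl, ih _ (by omega) hr]
        omega
  · rintro rfl
    induction T with
    | leaf => simp [size, planeTrees]
    | node l r ihl ihr =>
      obtain ⟨k, hk⟩ := Nat.exists_eq_add_of_lt (size_pos l)
      obtain ⟨j, hj⟩ := Nat.exists_eq_add_of_lt (size_pos r)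
      rw [show (node l r).size = k + j + 2 by rw [size]; omega, planeTrees]
      simp only [mem_biUnion, mem_attach, mem_image, mem_product, true_and]
      refine ⟨⟨k, mem_range.mpr (by omega)⟩, (l, r), ⟨?_, ?_⟩, rfl⟩
      · rwa [show k + 1 = l.size by omega]
      · rwa [show k + j + 1 - k = r.size by omega]

def toBinaryTree : PTree → BinaryTree Unit
  | leaf => .nil
  | node l r => .node () (toBinaryTree l) (toBinaryTree r)

def ofBinaryTree : BinaryTree Unit → PTree
  | .nil => leaf
  | .node _ l r => node (ofBinaryTree l) (ofBinaryTree r)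

def equivBinaryTree : PTree ≃ BinaryTree Unit where
  toFun := toBinaryTree
  invFun := ofBinaryTree
  left_inv T := by induction T <;> simp_all [toBinaryTree, ofBinaryTree]
  right_inv T := by induction T <;> simp_all [toBinaryTree, ofBinaryTree]

lemma numLeaves_toBinaryTree (T : PTree) : (toBinaryTree T).numLeaves = T.size := by
  induction T <;> simp_all [toBinaryTree, size]

lemma card_planeTrees {n : ℕ} (hn : 0 < n) : #(planeTrees n) = catalan (n - 1) := by
  obtain ⟨n, rfl⟩ := Nat.exists_eq_add_of_lt hn
  rw [← BinaryTree.treesOfNumNodesEq_card_eq_catalan]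
  refine card_equiv equivBinaryTree fun T => ?_
  rw [mem_planeTrees, BinaryTree.mem_treesOfNumNodesEq, ← numLeaves_toBinaryTree,
    BinaryTree.numLeaves_eq_numNodes_succ]
  simp [equivBinaryTree]

lemma encode_injective : Function.Injective encode := by
  intro S
  induction S with
  | leaf => rintro (_ | _) h <;> simp_all [encode]
  | node l r ihl ihr =>
    rintro (_ | ⟨l', r'⟩) h
    · simp [encode] at h
    · obtain ⟨hl, hr⟩ := Nat.pair_eq_pair.mp (Nat.succ_injective h)
      rw [ihl hl, ihr hr]

lemma size_normalize (T : PTree) : (normalize T).size = T.size := by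
  induction T with
  | leaf => rfl
  | node l r ihl ihr =>
    simp only [normalize]
    split <;> simp only [size, ihl, ihr, Nat.add_comm]

lemma size_eq_of_normalize_eq {S T : PTree} (h : normalize S = normalize T) :
    S.size = T.size := by
  rw [← size_normalize S, ← size_normalize T, h]

lemma normalize_leaf_ne_normalize_node (l r : PTree) : normalize leaf ≠ normalize (node l r) := by
  simp only [normalize]
  split <;> simp

lemma normalize_node_eq_normalize_node_iff {l r l' r' : PTree} :
    normalize (node l r) = normalize (node l' r') ↔
      (normalize l = normalize l' ∧ normalize r = normalize r') ∨
      (normalize l = normalize r' ∧ normalize r = normalize l') := by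
  constructor
  · simp only [normalize]
    split <;> split <;> simp only [node.injEq] <;> tauto
  · rintro (⟨h, h'⟩ | ⟨h, h'⟩)
    · simp only [normalize, h, h']
    · simp only [normalize, h, h']
      rcases lt_trichotomy (encode (normalize l')) (encode (normalize r')) with hlt | heq | hgt
      · rw [if_neg (not_le.mpr hlt), if_pos hlt.le]
      · rw [encode_injective heq]
      · rw [if_pos hgt.le, if_neg (not_le.mpr hgt)]

lemma length_isoFuns_node (l r l' r' : PTree) :
    (isoFuns (node l r) (node l' r')).length =
      (isoFuns l l').length * (isoFuns r r').length +
      (isoFuns l r').length * (isoFuns r l').length := by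
  simp [isoFuns, List.length_flatMap, List.sum_replicate]

lemma length_isoFuns_of_normalize_ne {S T : PTree} (h : normalize S ≠ normalize T) :
    (isoFuns S T).length = 0 := by
  induction S generalizing T with
  | leaf => cases T with
    | leaf => exact absurd rfl h
    | node => rfl
  | node l r ihl ihr =>
    cases T with
    | leaf => rfl
    | node l' r' =>
      rw [ne_eq, normalize_node_eq_normalize_node_iff, not_or, not_and, not_and] at h
      have straight : (isoFuns l l').length * (isoFuns r r').length = 0 := by
        by_cases hl : normalize l = normalize l'
        · rw [ihr (h.1 hl), mul_zero]
        · rw [ihl hl, zero_mul]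
      have crossed : (isoFuns l r').length * (isoFuns r l').length = 0 := by
        by_cases hl : normalize l = normalize r'
        · rw [ihr (h.2 hl), mul_zero]
        · rw [ihl hl, zero_mul]
      rw [length_isoFuns_node, straight, crossed]

lemma length_isoFuns_of_normalize_eq {S T : PTree} (h : normalize S = normalize T) :
    (isoFuns S T).length = (isoFuns S S).length := by
  induction S generalizing T with
  | leaf => cases T with
    | leaf => rfl
    | node l r => exact absurd h (normalize_leaf_ne_normalize_node l r)
  | node l r ihl ihr =>
    cases T with
    | leaf => exact absurd h.symm (normalize_leaf_ne_normalize_node l r)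
    | node l' r' =>
      rw [length_isoFuns_node, length_isoFuns_node]
      rw [normalize_node_eq_normalize_node_iff] at h
      by_cases hlr : normalize l = normalize r
      · have hl' : normalize l = normalize l' := h.elim (·.1) (fun h => hlr.trans h.2)
        have hr' : normalize l = normalize r' := h.elim (fun h => hlr.trans h.2) (·.1)
        rw [ihl hl', ihl hr', ihr (hlr.symm.trans hl'), ihr (hlr.symm.trans hr'), ihl hlr,
          ihr hlr.symm]
      · rw [length_isoFuns_of_normalize_ne hlr, length_isoFuns_of_normalize_ne (Ne.symm hlr)]
        rcases h with ⟨hl, hr⟩ | ⟨hl, hr⟩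
        · rw [ihl hl, ihr hr,
            length_isoFuns_of_normalize_ne fun e => hlr (e.trans hr.symm),
            length_isoFuns_of_normalize_ne fun e => hlr (hl.trans e.symm)]
        · rw [ihl hl, ihr hr,
            length_isoFuns_of_normalize_ne fun e => hlr (e.trans hr.symm),
            length_isoFuns_of_normalize_ne fun e => hlr (hl.trans e.symm), Nat.add_comm]

lemma length_isoFuns_self_pos (S : PTree) : 0 < (isoFuns S S).length := by
  induction S with
  | leaf => simp [isoFuns]
  | node l r ihl ihr =>
    rw [length_isoFuns_node]
    exact Nat.add_pos_left (Nat.mul_pos ihl ihr) _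

lemma node_injective2 : Function.Injective2 node := fun _ _ _ _ h => node.inj h

lemma card_image₂_node (s t : Finset PTree) : #(image₂ node s t) = #s * #t :=
  card_image₂ node_injective2 s t

lemma disjoint_image₂_node {s t u v : Finset PTree} (h : Disjoint s u) :
    Disjoint (image₂ node s t) (image₂ node u v) := by
  simp only [disjoint_left, mem_image₂]
  rintro _ ⟨a, ha, b, -, rfl⟩ ⟨c, hc, d, -, hcd⟩
  exact disjoint_left.mp h ha ((node_injective2 hcd).1 ▸ hc)

def isoClass (B : PTree) : Finset PTree :=
  (planeTrees B.size).filter fun T => normalize T = normalize B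

lemma mem_isoClass {B T : PTree} : T ∈ isoClass B ↔ normalize T = normalize B := by
  simp only [isoClass, mem_filter, mem_planeTrees, and_iff_right_iff_imp]
  exact size_eq_of_normalize_eq

lemma isoClass_leaf : isoClass leaf = {leaf} := by
  ext (_ | ⟨l, r⟩)
  · simp [mem_isoClass]
  · simp [mem_isoClass, (normalize_leaf_ne_normalize_node l r).symm]

lemma isoClass_node (b c : PTree) :
    isoClass (node b c) =
      image₂ node (isoClass b) (isoClass c) ∪ image₂ node (isoClass c) (isoClass b) := by
  ext (_ | ⟨l, r⟩)
  · simp [mem_isoClass, normalize_leaf_ne_normalize_node]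
  · simp [mem_isoClass, normalize_node_eq_normalize_node_iff]

lemma isoClass_eq_of_normalize_eq {b c : PTree} (h : normalize b = normalize c) :
    isoClass b = isoClass c := by
  ext T
  simp only [mem_isoClass, h]

lemma disjoint_isoClass {b c : PTree} (h : normalize b ≠ normalize c) :
    Disjoint (isoClass b) (isoClass c) :=
  disjoint_left.mpr fun _ hb hc => h ((mem_isoClass.mp hb).symm.trans (mem_isoClass.mp hc))

/-- Orbit–stabiliser for the `2 ^ (|B| - 1)` ways of swapping children at internal vertices,
acting on the plane trees of shape `B` with stabiliser `A(B)`. -/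
lemma card_isoClass_mul_length_isoFuns (B : PTree) :
    #(isoClass B) * (isoFuns B B).length = 2 ^ (B.size - 1) := by
  induction B with
  | leaf => simp [isoClass_leaf, isoFuns, size]
  | node b c ihb ihc =>
    suffices h : #(isoClass (node b c)) * (isoFuns (node b c) (node b c)).length =
        2 * ((#(isoClass b) * (isoFuns b b).length) * (#(isoClass c) * (isoFuns c c).length)) by
      obtain ⟨i, hi⟩ : ∃ i, b.size = i + 1 := ⟨_, (Nat.succ_pred_eq_of_pos (size_pos b)).symm⟩
      obtain ⟨j, hj⟩ : ∃ j, c.size = j + 1 := ⟨_, (Nat.succ_pred_eq_of_pos (size_pos c)).symm⟩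
      rw [h, ihb, ihc, size, hi, hj, show i + 1 + (j + 1) - 1 = i + j + 1 by omega]
      simp only [Nat.add_sub_cancel]
      ring
    rw [isoClass_node, length_isoFuns_node]
    by_cases hbc : normalize b = normalize c
    · rw [isoClass_eq_of_normalize_eq hbc, union_self, card_image₂_node,
        length_isoFuns_of_normalize_eq hbc, length_isoFuns_of_normalize_eq hbc.symm]
      ring
    · rw [card_union_of_disjoint (disjoint_image₂_node (disjoint_isoClass hbc)),
        card_image₂_node, card_image₂_node, length_isoFuns_of_normalize_ne hbc,
        length_isoFuns_of_normalize_ne (Ne.symm hbc)]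
      ring

lemma card_isoClass_eq_div (B : PTree) :
    (#(isoClass B) : ℝ) = 2 ^ (B.size - 1) / (isoFuns B B).length := by
  have hA : (0 : ℝ) < (isoFuns B B).length := by exact_mod_cast length_isoFuns_self_pos B
  rw [eq_div_iff hA.ne']
  exact_mod_cast card_isoClass_mul_length_isoFuns B

lemma filter_hasBranch_eq (B : PTree) (n : ℕ) :
    (planeTrees n).filter (fun T => hasBranch B T) =
      image₂ node (isoClass B) (planeTrees (n - B.size)) ∪
        image₂ node (planeTrees (n - B.size)) (isoClass B) := by
  ext (_ | ⟨l, r⟩)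
  · rw [mem_filter]
    simp [hasBranch]
  · rw [mem_filter]
    simp only [mem_union, mem_image₂, mem_planeTrees, mem_isoClass, hasBranch, node.injEq,
      exists_eq_right_right, size]
    have hl₀ := size_pos l
    have hr₀ := size_pos r
    constructor
    · rintro ⟨hn, hl | hr⟩
      · exact Or.inl ⟨hl, by have := size_eq_of_normalize_eq hl; omega⟩
      · exact Or.inr ⟨by have := size_eq_of_normalize_eq hr; omega, hr⟩
    · rintro (⟨hl, hr⟩ | ⟨hl, hr⟩)
      · exact ⟨by have := size_eq_of_normalize_eq hl; omega, Or.inl hl⟩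
      · exact ⟨by have := size_eq_of_normalize_eq hr; omega, Or.inr hr⟩

lemma card_filter_hasBranch (B : PTree) {n : ℕ} (hn : 2 * B.size < n) :
    #((planeTrees n).filter (fun T => hasBranch B T)) =
      2 * #(isoClass B) * catalan (n - B.size - 1) := by
  have hsizes : Disjoint (isoClass B) (planeTrees (n - B.size)) :=
    disjoint_left.mpr fun T hB hn' => by
      have := size_eq_of_normalize_eq (mem_isoClass.mp hB)
      have := mem_planeTrees.mp hn'
      omega
  rw [filter_hasBranch_eq, card_union_of_disjoint (disjoint_image₂_node hsizes),
    card_image₂_node, card_image₂_node, card_planeTrees (by omega)]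
  ring

end PTree

lemma catalan_pos (n : ℕ) : 0 < catalan n := by
  have h := Nat.centralBinom_pos n
  rw [← succ_mul_catalan_eq_centralBinom] at h
  exact Nat.pos_of_mul_pos_left h

lemma add_two_mul_catalan_succ (n : ℕ) :
    (n + 2) * catalan (n + 1) = 2 * (2 * n + 1) * catalan n := by
  refine Nat.eq_of_mul_eq_mul_left n.succ_pos ?_
  calc (n + 1) * ((n + 2) * catalan (n + 1))
      = (n + 1) * Nat.centralBinom (n + 1) := by
        rw [← succ_mul_catalan_eq_centralBinom]
    _ = 2 * (2 * n + 1) * Nat.centralBinom n := Nat.succ_mul_centralBinom_succ n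
    _ = (n + 1) * (2 * (2 * n + 1) * catalan n) := by
        rw [← succ_mul_catalan_eq_centralBinom]; ring

lemma tendsto_catalan_div_catalan_succ :
    Tendsto (fun n => (catalan n : ℝ) / catalan (n + 1)) atTop (𝓝 (1 / 4)) := by
  have hinv := tendsto_inv_atTop_nhds_zero_nat (𝕜 := ℝ)
  have h := ((tendsto_const_nhds (x := (1 : ℝ))).add (hinv.const_mul 2)).div
    (tendsto_const_nhds.add (hinv.const_mul 2)) (by norm_num : (4 : ℝ) + 2 * 0 ≠ 0)
  rw [show (1 + 2 * 0) / (4 + 2 * 0) = (1 / 4 : ℝ) by norm_num] at h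
  refine h.congr' ?_
  filter_upwards [eventually_gt_atTop 0] with n hn
  have hrec : ((n : ℝ) + 2) * catalan (n + 1) = 2 * (2 * n + 1) * catalan n := by
    exact_mod_cast add_two_mul_catalan_succ n
  have : (0 : ℝ) < catalan (n + 1) := by exact_mod_cast catalan_pos _
  have : (0 : ℝ) < n := by exact_mod_cast hn
  -- `C_n / C_(n+1) = (n + 2) / (4n + 2) = (1 + 2/n) / (4 + 2/n)`
  rw [Pi.div_apply]
  field_simp
  linear_combination hrec

lemma tendsto_catalan_div_catalan_add (m : ℕ) :
    Tendsto (fun n => (catalan n : ℝ) / catalan (n + m)) atTop (𝓝 ((1 / 4) ^ m)) := by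
  induction m with
  | zero =>
    simp only [Nat.add_zero, pow_zero]
    exact tendsto_const_nhds.congr fun n => (div_self (by exact_mod_cast (catalan_pos n).ne')).symm
  | succ m ih =>
    rw [pow_succ]
    refine (ih.mul (tendsto_catalan_div_catalan_succ.comp (tendsto_add_atTop_nat m))).congr
      fun n => ?_
    have : (catalan (n + m) : ℝ) ≠ 0 := by exact_mod_cast (catalan_pos _).ne'
    simp only [Function.comp_apply, ← Nat.add_assoc]
    field_simp

open PTree in
/-- For `n > 2|B|` the number of plane binary trees with `n` leaves having a root
branch isomorphic to `B` equals `2 · (2^(|B|-1)/|A(B)|) · C_(n-|B|)` (with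
`C_k = catalan (k-1)` the number of plane binary trees with `k` leaves); consequently
the proportion of such trees tends to `2^(-|B|)/|A(B)|`. -/
theorem count_root_branch (B : PTree) :
    (∀ n : ℕ, 2 * B.size < n →
      (((planeTrees n).filter (fun T => hasBranch B T)).card : ℝ)
        = 2 * ((2 : ℝ) ^ (B.size - 1) / ((isoFuns B B).length : ℝ))
            * (catalan (n - B.size - 1) : ℝ)) ∧
    Filter.Tendsto
      (fun n : ℕ => (((planeTrees n).filter (fun T => hasBranch B T)).card : ℝ)
        / ((planeTrees n).card : ℝ))
      Filter.atTop (nhds (1 / (2 ^ B.size * ((isoFuns B B).length : ℝ)))) := by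
  have hcount : ∀ n : ℕ, 2 * B.size < n →
      (#((planeTrees n).filter (fun T => hasBranch B T)) : ℝ)
        = 2 * ((2 : ℝ) ^ (B.size - 1) / (isoFuns B B).length) * catalan (n - B.size - 1) := by
    intro n hn
    rw [card_filter_hasBranch B hn, ← card_isoClass_eq_div]
    push_cast
    ring
  refine ⟨hcount, ?_⟩
  obtain ⟨k, hk⟩ : ∃ k, B.size = k + 1 := ⟨_, (Nat.succ_pred_eq_of_pos (size_pos B)).symm⟩
  have hlimit : 2 * ((2 : ℝ) ^ (B.size - 1) / (isoFuns B B).length) * (1 / 4) ^ B.size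
      = 1 / (2 ^ B.size * (isoFuns B B).length) := by
    rw [hk, Nat.add_sub_cancel, div_pow, one_pow, show (4 : ℝ) = 2 ^ 2 by norm_num, ← pow_mul]
    field_simp
    ring
  rw [← hlimit]
  have hratio := (tendsto_catalan_div_catalan_add B.size).comp (tendsto_sub_atTop_nat (B.size + 1))
  refine (hratio.const_mul _).congr' ?_
  filter_upwards [eventually_gt_atTop (2 * B.size)] with n hn
  rw [Function.comp_apply, hcount n hn, card_planeTrees (by omega), mul_div_assoc,
    show n - (B.size + 1) + B.size = n - 1 by omega, Nat.sub_sub]
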